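/- Let F be a formal power series over ℚ with zero constant term and linear coefficient 1. Then for every n ≥ 0, there exists a unique formal power series A over ℚ with zero constant term and linear coefficient 1 such that the 2^n-fold compositional iterate A^{(2^n)}(x) equals F(x). -/

import Mathlib

/-!
If `A ≡ A' (mod X^j)` with `j ≥ 2` and both are tangent to the identity, then the `j`-th
coefficients of their `k`-th iterates differ by exactly `k` times the difference of their own
`j`-th coefficients: in a composition `A(B(x))` the coefficient of `x^j` sees `[x^j] A` and
`[x^j] B` only through the linear terms `[x^j] A · ([x] B)^j` and `[x] A · [x^j] B`.
So `[x^j] A^{(k)} = k · [x^j] A + (terms in lower coefficients of A)`, and since `k` is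
invertible in `ℚ`, the coefficients of a `k`-th iterative root of `F` are forced one at a time.
This gives existence by recursion and uniqueness by induction, for every `k ≥ 1`.
-/

open PowerSeries Finset

/-- Composition `G(A(x))` of formal power series, valid when `A` has zero
constant term. -/
noncomputable def PSComp (G A : PowerSeries ℚ) : PowerSeries ℚ :=
  PowerSeries.mk fun n => ∑ m ∈ range (n + 1), coeff m G * coeff n (A ^ m)

/-- The `m`-fold compositional iterate of `A`: `A^{(0)} = x`,
`A^{(m+1)} = A(A^{(m)}(x))`. -/
noncomputable def PSIter (A : PowerSeries ℚ) (m : ℕ) : PowerSeries ℚ :=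
  (fun G => PSComp A G)^[m] X

theorem pow_add_dvd_pow_succ_sub_pow_succ {R : Type*} [CommRing R] {x a b : R} {i : ℕ}
    (ha : x ∣ a) (hb : x ∣ b) (hab : x ^ i ∣ a - b) (m : ℕ) :
    x ^ (i + m) ∣ a ^ (m + 1) - b ^ (m + 1) := by
  induction m with
  | zero => simpa using hab
  | succ m ih =>
    have hsplit : a ^ (m + 1 + 1) - b ^ (m + 1 + 1) =
        a * (a ^ (m + 1) - b ^ (m + 1)) + b ^ (m + 1) * (a - b) := by ring
    rw [hsplit]
    refine dvd_add ?_ ?_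
    · rw [show i + (m + 1) = 1 + (i + m) by omega, pow_add, pow_one]
      exact mul_dvd_mul ha ih
    · rw [show i + (m + 1) = (m + 1) + i by omega, pow_add]
      exact mul_dvd_mul (pow_dvd_pow_of_dvd hb _) hab

namespace PowerSeries

theorem X_pow_dvd_sub_iff {R : Type*} [CommRing R] {A A' : R⟦X⟧} {j : ℕ} :
    X ^ j ∣ A - A' ↔ ∀ i < j, coeff i A = coeff i A' := by
  simp only [X_pow_dvd_iff, map_sub, sub_eq_zero]

theorem X_pow_dvd_sub_trunc {R : Type*} [CommRing R] (A : R⟦X⟧) (j : ℕ) :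
    X ^ j ∣ A - (trunc j A : R⟦X⟧) :=
  X_pow_dvd_sub_iff.mpr fun _ hi => (coeff_coe_trunc_of_lt hi).symm

theorem coeff_pow_eq_of_X_pow_dvd_sub {R : Type*} [CommRing R] {B B' : R⟦X⟧} {j m : ℕ}
    (hB : X ∣ B) (hB' : X ∣ B') (h : X ^ j ∣ B - B') (hm : 2 ≤ m) :
    coeff j (B ^ m) = coeff j (B' ^ m) := by
  obtain ⟨m, rfl⟩ : ∃ m', m = m' + 1 := ⟨m - 1, by omega⟩
  have hdvd := (pow_dvd_pow X (by omega : j + 1 ≤ j + m)).trans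
    (pow_add_dvd_pow_succ_sub_pow_succ hB hB' h m)
  exact X_pow_dvd_sub_iff.mp hdvd j j.lt_succ_self

end PowerSeries

theorem coeff_PSComp (G A : ℚ⟦X⟧) (n : ℕ) :
    coeff n (PSComp G A) = ∑ m ∈ range (n + 1), coeff m G * coeff n (A ^ m) :=
  coeff_mk _ _

theorem PSIter_zero (A : ℚ⟦X⟧) : PSIter A 0 = X := rfl

theorem PSIter_succ (A : ℚ⟦X⟧) (k : ℕ) : PSIter A (k + 1) = PSComp A (PSIter A k) :=
  Function.iterate_succ_apply' _ _ _

theorem constantCoeff_PSComp (G A : ℚ⟦X⟧) : constantCoeff (PSComp G A) = constantCoeff G := by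
  rw [← coeff_zero_eq_constantCoeff_apply, coeff_PSComp]
  simp

theorem coeff_one_PSComp (G A : ℚ⟦X⟧) : coeff 1 (PSComp G A) = coeff 1 G * coeff 1 A := by
  simp [coeff_PSComp, sum_range_succ, coeff_one]

theorem PSComp_congr {A A' B B' : ℚ⟦X⟧} {j : ℕ} (hA : X ^ j ∣ A - A') (hB : X ^ j ∣ B - B') :
    X ^ j ∣ PSComp A B - PSComp A' B' := by
  refine X_pow_dvd_sub_iff.mpr fun i hi => ?_
  rw [coeff_PSComp, coeff_PSComp]
  refine sum_congr rfl fun m hm => ?_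
  have hBm := X_pow_dvd_sub_iff.mp (hB.trans (sub_dvd_pow_sub_pow B B' m)) i hi
  rw [X_pow_dvd_sub_iff.mp hA m (by rw [mem_range] at hm; omega), hBm]

theorem PSIter_congr {A A' : ℚ⟦X⟧} {j : ℕ} (h : X ^ j ∣ A - A') (k : ℕ) :
    X ^ j ∣ PSIter A k - PSIter A' k := by
  induction k with
  | zero => simp [PSIter_zero]
  | succ k ih => rw [PSIter_succ, PSIter_succ]; exact PSComp_congr h ih

structure IsTangentToId (A : ℚ⟦X⟧) : Prop where
  constantCoeff_eq_zero : constantCoeff A = 0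
  coeff_one_eq_one : coeff 1 A = 1

theorem isTangentToId_X : IsTangentToId X :=
  ⟨constantCoeff_X, coeff_one_X⟩

namespace IsTangentToId

variable {A B : ℚ⟦X⟧}

theorem X_dvd (hA : IsTangentToId A) : X ∣ A :=
  X_dvd_iff.mpr hA.constantCoeff_eq_zero

theorem X_sq_dvd_sub (hA : IsTangentToId A) (hB : IsTangentToId B) : X ^ 2 ∣ A - B := by
  refine X_pow_dvd_sub_iff.mpr fun i hi => ?_
  interval_cases i
  · simp only [coeff_zero_eq_constantCoeff_apply, hA.constantCoeff_eq_zero,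
      hB.constantCoeff_eq_zero]
  · rw [hA.coeff_one_eq_one, hB.coeff_one_eq_one]

theorem PSIter (hA : IsTangentToId A) (k : ℕ) : IsTangentToId (PSIter A k) := by
  induction k with
  | zero => exact isTangentToId_X
  | succ k ih =>
    rw [PSIter_succ]
    exact ⟨(constantCoeff_PSComp A _).trans hA.constantCoeff_eq_zero,
      by rw [coeff_one_PSComp, hA.coeff_one_eq_one, ih.coeff_one_eq_one, one_mul]⟩

theorem trunc (hA : IsTangentToId A) {j : ℕ} (hj : 2 ≤ j) : IsTangentToId (trunc j A : ℚ⟦X⟧) :=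
  ⟨by rw [← coeff_zero_eq_constantCoeff_apply, coeff_coe_trunc_of_lt (by omega),
      coeff_zero_eq_constantCoeff_apply, hA.constantCoeff_eq_zero],
    by rw [coeff_coe_trunc_of_lt (by omega), hA.coeff_one_eq_one]⟩

theorem coeff_pow_self (hA : IsTangentToId A) (j : ℕ) : coeff j (A ^ j) = 1 := by
  cases j with
  | zero => simp
  | succ j =>
    have hdvd := pow_add_dvd_pow_succ_sub_pow_succ hA.X_dvd dvd_rfl
      (hA.X_sq_dvd_sub isTangentToId_X) j
    rw [X_pow_dvd_sub_iff.mp hdvd (j + 1) (by omega), coeff_X_pow_self]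

end IsTangentToId

theorem coeff_PSComp_sub_of_X_pow_dvd_sub {A A' B B' : ℚ⟦X⟧} {j : ℕ} (hj : 2 ≤ j)
    (hA : coeff 1 A = 1) (hB : IsTangentToId B) (hB' : X ∣ B')
    (hAA' : X ^ j ∣ A - A') (hBB' : X ^ j ∣ B - B') :
    coeff j (PSComp A B) - coeff j (PSComp A' B') =
      (coeff j A - coeff j A') + (coeff j B - coeff j B') := by
  have hterm : ∀ m ∈ range (j + 1),
      coeff m A * coeff j (B ^ m) - coeff m A' * coeff j (B' ^ m) =
        (if m = j then coeff j A - coeff j A' else 0) +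
          (if m = 1 then coeff j B - coeff j B' else 0) := by
    intro m hm
    rw [mem_range] at hm
    obtain rfl | rfl | hm2 : m = 0 ∨ m = 1 ∨ 2 ≤ m := by omega
    · simp [coeff_one, show j ≠ 0 by omega, show (0 : ℕ) ≠ j by omega]
    · rw [← X_pow_dvd_sub_iff.mp hAA' 1 (by omega), hA]
      simp [show 1 ≠ j by omega]
    · rw [← coeff_pow_eq_of_X_pow_dvd_sub hB.X_dvd hB' hBB' hm2, ← sub_mul,
        if_neg (show m ≠ 1 by omega), add_zero]
      rcases (Nat.lt_succ_iff.mp hm).lt_or_eq with hmj | rfl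
      · rw [X_pow_dvd_sub_iff.mp hAA' m hmj, sub_self, zero_mul, if_neg hmj.ne]
      · rw [hB.coeff_pow_self, mul_one, if_pos rfl]
  rw [coeff_PSComp, coeff_PSComp, ← sum_sub_distrib, sum_congr rfl hterm, sum_add_distrib,
    sum_ite_eq', sum_ite_eq', if_pos (mem_range.mpr (by omega)),
    if_pos (mem_range.mpr (by omega))]

theorem coeff_PSIter_sub_of_X_pow_dvd_sub {A A' : ℚ⟦X⟧} {j : ℕ} (hj : 2 ≤ j)
    (hA : IsTangentToId A) (hA' : IsTangentToId A') (h : X ^ j ∣ A - A') (k : ℕ) :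
    coeff j (PSIter A k) - coeff j (PSIter A' k) = k * (coeff j A - coeff j A') := by
  induction k with
  | zero => simp [PSIter_zero]
  | succ k ih =>
    rw [PSIter_succ, PSIter_succ, coeff_PSComp_sub_of_X_pow_dvd_sub hj hA.coeff_one_eq_one
      (hA.PSIter k) (hA'.PSIter k).X_dvd h (PSIter_congr h k), ih]
    push_cast
    ring

theorem eq_of_PSIter_eq {A A' : ℚ⟦X⟧} (hA : IsTangentToId A) (hA' : IsTangentToId A')
    {k : ℕ} (hk : k ≠ 0) (h : PSIter A k = PSIter A' k) : A = A' := by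
  ext j
  induction j using Nat.strong_induction_on with
  | _ j ih =>
    rcases lt_or_ge j 2 with hj | hj
    · exact X_pow_dvd_sub_iff.mp (hA.X_sq_dvd_sub hA') j hj
    · have hdiff := coeff_PSIter_sub_of_X_pow_dvd_sub hj hA hA' (X_pow_dvd_sub_iff.mpr ih) k
      rw [h, sub_self, eq_comm, mul_eq_zero, sub_eq_zero] at hdiff
      exact hdiff.resolve_left (Nat.cast_ne_zero.mpr hk)

/-- For `j ≥ 2` the coefficient is the solution of the linear equation that
`coeff_PSIter_sub_of_X_pow_dvd_sub` gives for the root and its truncation below degree `j`. -/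
noncomputable def iterRootCoeff (F : ℚ⟦X⟧) (k : ℕ) : ℕ → ℚ
  | 0 => 0
  | 1 => 1
  | j + 2 => (coeff (j + 2) F - coeff (j + 2)
      (PSIter (mk fun i => if _ : i < j + 2 then iterRootCoeff F k i else 0) k)) / k
  termination_by j => j

noncomputable def iterRoot (F : ℚ⟦X⟧) (k : ℕ) : ℚ⟦X⟧ :=
  mk (iterRootCoeff F k)

theorem isTangentToId_iterRoot (F : ℚ⟦X⟧) (k : ℕ) : IsTangentToId (iterRoot F k) :=
  ⟨by rw [← coeff_zero_eq_constantCoeff_apply, iterRoot, coeff_mk, iterRootCoeff],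
    by rw [iterRoot, coeff_mk, iterRootCoeff]⟩

theorem coeff_iterRoot {F : ℚ⟦X⟧} {k j : ℕ} (hj : 2 ≤ j) :
    coeff j (iterRoot F k) =
      (coeff j F - coeff j (PSIter (trunc j (iterRoot F k) : ℚ⟦X⟧) k)) / k := by
  obtain ⟨j, rfl⟩ : ∃ j', j = j' + 2 := ⟨j - 2, by omega⟩
  rw [iterRoot, coeff_mk, iterRootCoeff]
  congr 4
  ext i
  simp [coeff_trunc]

theorem PSIter_iterRoot {F : ℚ⟦X⟧} (hF : IsTangentToId F) {k : ℕ} (hk : k ≠ 0) :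
    PSIter (iterRoot F k) k = F := by
  set A := iterRoot F k
  have hA := isTangentToId_iterRoot F k
  ext j
  rcases lt_or_ge j 2 with hj | hj
  · exact X_pow_dvd_sub_iff.mp ((hA.PSIter k).X_sq_dvd_sub hF) j hj
  · have hdiff := coeff_PSIter_sub_of_X_pow_dvd_sub hj hA (hA.trunc hj)
      (X_pow_dvd_sub_trunc A j) k
    have htrunc : coeff j (trunc j A : ℚ⟦X⟧) = 0 := by simp [coeff_trunc]
    rw [htrunc, sub_zero, coeff_iterRoot hj,
      mul_div_cancel₀ _ (Nat.cast_ne_zero.mpr hk)] at hdiff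
    linarith

theorem stmt_15 (F : PowerSeries ℚ) (hF0 : constantCoeff F = 0)
    (hF1 : coeff 1 F = 1) (n : ℕ) :
    ∃! A : PowerSeries ℚ,
      constantCoeff A = 0 ∧ coeff 1 A = 1 ∧ PSIter A (2 ^ n) = F := by
  have hk : 2 ^ n ≠ 0 := pow_ne_zero n two_ne_zero
  have hA := isTangentToId_iterRoot F (2 ^ n)
  have hAF := PSIter_iterRoot ⟨hF0, hF1⟩ hk
  refine ⟨iterRoot F (2 ^ n), ⟨hA.constantCoeff_eq_zero, hA.coeff_one_eq_one, hAF⟩, ?_⟩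
  rintro B ⟨hB0, hB1, hBF⟩
  exact eq_of_PSIter_eq ⟨hB0, hB1⟩ hA hk (hBF.trans hAF.symm)
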